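/- arXiv:2507.05936 — 3 statements merged into one kernel-verified Lean document; each statement's English description precedes it below -/
import Mathlib

section
/- For every real number λ ≥ 0 and every s ∈ (0,1), one has λ^s = (s/Γ(1−s)) · ∫₀^∞ (1 − e^{−tλ}) t^{−1−s} dt. -/
open MeasureTheory Set Filter

lemma aux_meas (s : ℝ) : Measurable (fun t : ℝ => (1 - Real.exp (-t)) * t ^ (-1 - s)) := by
  fun_prop

lemma aux_int {s : ℝ} (hs : s ∈ Set.Ioo (0:ℝ) 1) :
    IntegrableOn (fun t : ℝ => (1 - Real.exp (-t)) * t ^ (-1 - s)) (Set.Ioi 0) := by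
  obtain ⟨hs0, hs1⟩ := hs
  rw [← Ioc_union_Ioi_eq_Ioi (zero_le_one (α := ℝ)), integrableOn_union]
  constructor
  · have h1 : IntegrableOn (fun t : ℝ => t ^ (-s)) (Ioc (0:ℝ) 1) := by
      have := intervalIntegral.intervalIntegrable_rpow' (a := (0:ℝ)) (b := 1) (r := -s)
        (by linarith)
      rwa [intervalIntegrable_iff_integrableOn_Ioc_of_le zero_le_one] at this
    refine h1.mono' ((aux_meas s).aestronglyMeasurable.restrict) ?_
    filter_upwards [ae_restrict_mem measurableSet_Ioc] with t ht
    have ht0 : 0 < t := ht.1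
    have hexp : 0 ≤ 1 - Real.exp (-t) := by
      simpa using Real.exp_le_one_iff.mpr (by linarith : -t ≤ 0)
    have hle : 1 - Real.exp (-t) ≤ t := by
      have := Real.add_one_le_exp (-t); linarith
    rw [Real.norm_eq_abs, abs_of_nonneg (mul_nonneg hexp (Real.rpow_nonneg ht0.le _))]
    calc (1 - Real.exp (-t)) * t ^ (-1 - s) ≤ t * t ^ (-1 - s) := by
          exact mul_le_mul_of_nonneg_right hle (Real.rpow_nonneg ht0.le _)
      _ = t ^ (-s) := by
          rw [show (-s : ℝ) = 1 + (-1 - s) by ring, Real.rpow_add ht0, Real.rpow_one]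
  · have h1 : IntegrableOn (fun t : ℝ => t ^ (-1 - s)) (Ioi (1:ℝ)) :=
      integrableOn_Ioi_rpow_of_lt (by linarith) one_pos
    refine h1.mono' ((aux_meas s).aestronglyMeasurable.restrict) ?_
    filter_upwards [ae_restrict_mem measurableSet_Ioi] with t ht
    have ht0 : (0:ℝ) < t := lt_trans one_pos ht
    have hexp : 0 ≤ 1 - Real.exp (-t) := by
      simpa using Real.exp_le_one_iff.mpr (by linarith : -t ≤ 0)
    have hexp1 : 1 - Real.exp (-t) ≤ 1 := by
      have := Real.exp_pos (-t); linarith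
    rw [Real.norm_eq_abs, abs_of_nonneg (mul_nonneg hexp (Real.rpow_nonneg ht0.le _))]
    calc (1 - Real.exp (-t)) * t ^ (-1 - s) ≤ 1 * t ^ (-1 - s) :=
          mul_le_mul_of_nonneg_right hexp1 (Real.rpow_nonneg ht0.le _)
      _ = t ^ (-1 - s) := one_mul _

lemma aux_val {s : ℝ} (hs : s ∈ Set.Ioo (0:ℝ) 1) :
    ∫ t in Set.Ioi (0:ℝ), (1 - Real.exp (-t)) * t ^ (-1 - s) = Real.Gamma (1 - s) / s := by
  obtain ⟨hs0, hs1⟩ := hs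
  set f : ℝ → ℝ := fun t => (1 - Real.exp (-t)) * t ^ (-s) with hf
  set F : ℝ → ℝ := fun t => Real.exp (-t) * t ^ (-s)
      - s * ((1 - Real.exp (-t)) * t ^ (-1 - s)) with hF
  have hint1 : IntegrableOn (fun t : ℝ => Real.exp (-t) * t ^ (-s)) (Ioi 0) := by
    have := Real.GammaIntegral_convergent (s := 1 - s) (by linarith)
    simpa [show (1 - s - 1 : ℝ) = -s by ring] using this
  have hint2 := aux_int ⟨hs0, hs1⟩
  have hintF : IntegrableOn F (Ioi 0) := hint1.sub (hint2.const_mul s)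
  have hderiv : ∀ t ∈ Ioi (0:ℝ), HasDerivAt f (F t) t := by
    intro t ht
    have h1 : HasDerivAt (fun t : ℝ => 1 - Real.exp (-t)) (Real.exp (-t)) t := by
      have h := (Real.hasDerivAt_exp (-t)).comp t (hasDerivAt_neg t)
      exact ((hasDerivAt_const t (1:ℝ)).sub h).congr_deriv (by simp)
    have h2 : HasDerivAt (fun t : ℝ => t ^ (-s)) (-s * t ^ (-s - 1)) t :=
      Real.hasDerivAt_rpow_const (Or.inl (ne_of_gt ht))
    have h3 := h1.mul h2
    convert h3 using 1
    · rfl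
    · rfl
    · rfl
    simp only [hF, show (-1 - s : ℝ) = -s - 1 by ring]
    ring
  have hnonneg : ∀ t : ℝ, 0 ≤ t → 0 ≤ f t := by
    intro t ht
    have hexp : 0 ≤ 1 - Real.exp (-t) := by
      simpa using Real.exp_le_one_iff.mpr (by linarith : -t ≤ 0)
    exact mul_nonneg hexp (Real.rpow_nonneg ht _)
  have hbound : ∀ t : ℝ, 0 ≤ t → f t ≤ t ^ (1 - s) := by
    intro t ht
    rcases eq_or_lt_of_le ht with rfl | ht0
    · simp [hf, Real.zero_rpow (by linarith : (-s : ℝ) ≠ 0)]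
      positivity
    · have hle : 1 - Real.exp (-t) ≤ t := by
        have := Real.add_one_le_exp (-t); linarith
      calc f t ≤ t * t ^ (-s) :=
            mul_le_mul_of_nonneg_right hle (Real.rpow_nonneg ht _)
        _ = t ^ (1 - s) := by
            rw [show (1 - s : ℝ) = 1 + (-s) by ring, Real.rpow_add ht0, Real.rpow_one]
  have hcont : ContinuousWithinAt f (Ici 0) 0 := by
    have hf0 : f 0 = 0 := by simp [hf]
    rw [ContinuousWithinAt, hf0]
    have hg : Tendsto (fun t : ℝ => t ^ (1 - s)) (nhdsWithin 0 (Ici 0)) (nhds 0) := by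
      have := (Real.continuousAt_rpow_const 0 (1 - s) (Or.inr (by linarith))).continuousWithinAt
        (s := Ici 0)
      rw [ContinuousWithinAt] at this
      simpa [Real.zero_rpow (by linarith : (1 - s : ℝ) ≠ 0)] using this
    refine squeeze_zero' ?_ ?_ hg
    · filter_upwards [self_mem_nhdsWithin] with t ht using hnonneg t ht
    · filter_upwards [self_mem_nhdsWithin] with t ht using hbound t ht
  have htop : Tendsto f atTop (nhds 0) := by
    have hg : Tendsto (fun t : ℝ => t ^ (-s)) atTop (nhds 0) :=
      tendsto_rpow_neg_atTop hs0
    refine squeeze_zero' ?_ ?_ hg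
    · filter_upwards [Ioi_mem_atTop (0:ℝ)] with t ht using hnonneg t ht.le
    · filter_upwards [Ioi_mem_atTop (0:ℝ)] with t ht
      have hexp1 : 1 - Real.exp (-t) ≤ 1 := by
        have := Real.exp_pos (-t); linarith
      calc f t ≤ 1 * t ^ (-s) :=
            mul_le_mul_of_nonneg_right hexp1 (Real.rpow_nonneg ht.le _)
        _ = t ^ (-s) := one_mul _
  have key := integral_Ioi_of_hasDerivAt_of_tendsto hcont hderiv hintF htop
  have hf0 : f 0 = 0 := by simp [hf]
  rw [hf0, sub_zero] at key
  have hsplit : ∫ t in Ioi (0:ℝ), F t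
      = (∫ t in Ioi (0:ℝ), Real.exp (-t) * t ^ (-s))
        - s * ∫ t in Ioi (0:ℝ), (1 - Real.exp (-t)) * t ^ (-1 - s) := by
    rw [hF]
    rw [integral_sub hint1 (hint2.const_mul s), MeasureTheory.integral_const_mul]
  have hGamma : Real.Gamma (1 - s) = ∫ t in Ioi (0:ℝ), Real.exp (-t) * t ^ (-s) := by
    rw [Real.Gamma_eq_integral (by linarith : (0:ℝ) < 1 - s)]
    congr 1 with t
    rw [show (1 - s - 1 : ℝ) = -s by ring]
  rw [hsplit, ← hGamma] at key
  field_simp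
  linarith

theorem stmt0 (l : ℝ) (hl : 0 ≤ l) (s : ℝ) (hs : s ∈ Set.Ioo (0:ℝ) 1) :
    l ^ s = (s / Real.Gamma (1 - s)) *
      ∫ t in Set.Ioi (0:ℝ), (1 - Real.exp (-t * l)) * t ^ (-1 - s) := by
  obtain ⟨hs0, hs1⟩ := hs
  rcases eq_or_lt_of_le hl with rfl | hl'
  · simp [Real.zero_rpow (ne_of_gt hs0)]
  · have hGamma_pos : 0 < Real.Gamma (1 - s) := Real.Gamma_pos_of_pos (by linarith)
    have hcongr : ∫ t in Ioi (0:ℝ), (1 - Real.exp (-t * l)) * t ^ (-1 - s)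
        = ∫ t in Ioi (0:ℝ),
            (fun u : ℝ => (1 - Real.exp (-u)) * u ^ (-1 - s) * l ^ (1 + s)) (l * t) := by
      refine setIntegral_congr_fun measurableSet_Ioi (fun t ht => ?_)
      have ht0 : (0:ℝ) < t := ht
      simp only
      rw [Real.mul_rpow hl ht0.le]
      have hll : l ^ (-1 - s) * l ^ (1 + s) = 1 := by
        rw [← Real.rpow_add hl', show (-1 - s + (1 + s) : ℝ) = 0 by ring, Real.rpow_zero]
      calc (1 - Real.exp (-t * l)) * t ^ (-1 - s)
          = (1 - Real.exp (-(l * t))) * t ^ (-1 - s) * (l ^ (-1 - s) * l ^ (1 + s)) := by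
            rw [hll, mul_one, show -t * l = -(l * t) by ring]
        _ = (1 - Real.exp (-(l * t))) * (l ^ (-1 - s) * t ^ (-1 - s)) * l ^ (1 + s) := by
            ring
    rw [hcongr, MeasureTheory.integral_comp_mul_left_Ioi
      (fun u : ℝ => (1 - Real.exp (-u)) * u ^ (-1 - s) * l ^ (1 + s)) 0 hl', mul_zero]
    rw [show (fun u : ℝ => (1 - Real.exp (-u)) * u ^ (-1 - s) * l ^ (1 + s))
        = fun u : ℝ => ((1 - Real.exp (-u)) * u ^ (-1 - s)) * l ^ (1 + s) from rfl]
    rw [integral_mul_const, aux_val ⟨hs0, hs1⟩]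
    have hl1s : l ^ (1 + s) = l * l ^ s := by
      rw [Real.rpow_add hl', Real.rpow_one]
    rw [smul_eq_mul, hl1s]
    field_simp
end

section
/- The identity ∫₀¹ (e^{−t} − 1)/t dt + ∫₁^∞ e^{−t}/t dt = −γ holds, where γ is the Euler–Mascheroni constant, i.e. γ = −Γ′(1). -/
open Set Real MeasureTheory Filter Topology

-- measurability helpers
lemma meas_explog : ∀ s : Set ℝ, (∀ x ∈ s, x ≠ 0) → MeasurableSet s →
    AEStronglyMeasurable (fun x : ℝ => exp (-x) * log x) (volume.restrict s) := by
  intro s hs hm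
  exact ((continuous_exp.comp continuous_neg).continuousOn.mul
    (continuousOn_log.mono (fun x hx => hs x hx))).aestronglyMeasurable hm

lemma int_explog_Ioi1 : IntegrableOn (fun x : ℝ => exp (-x) * log x) (Ioi 1) := by
  have h2 : IntegrableOn (fun x : ℝ => exp (-x) * x ^ ((2:ℝ) - 1)) (Ioi 1) :=
    (Real.GammaIntegral_convergent (by norm_num : (0:ℝ) < 2)).mono_set
      (Ioi_subset_Ioi zero_le_one)
  refine Integrable.mono' h2 (meas_explog _ (fun x hx => by
    have : (1:ℝ) < x := hx; positivity) measurableSet_Ioi) ?_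
  filter_upwards [ae_restrict_mem measurableSet_Ioi] with x hx
  have hx1 : (1:ℝ) < x := hx
  have hlog : 0 ≤ log x := log_nonneg hx1.le
  have hle : log x ≤ x := (log_le_sub_one_of_pos (by linarith)).trans (by linarith)
  rw [norm_mul, norm_of_nonneg (exp_pos _).le, norm_of_nonneg hlog]
  have : x ^ ((2:ℝ) - 1) = x := by norm_num
  rw [this]
  exact mul_le_mul_of_nonneg_left hle (exp_pos _).le

lemma int_expdiv_Ioi1 : IntegrableOn (fun x : ℝ => exp (-x) / x) (Ioi 1) := by
  have h2 : IntegrableOn (fun x : ℝ => exp (-1 * x)) (Ioi 1) :=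
    exp_neg_integrableOn_Ioi 1 one_pos
  refine Integrable.mono' h2 ?_ ?_
  · exact ((continuous_exp.comp continuous_neg).continuousOn.div continuousOn_id
      (fun x hx => by have : (1:ℝ) < x := hx; positivity)).aestronglyMeasurable
      measurableSet_Ioi
  · filter_upwards [ae_restrict_mem measurableSet_Ioi] with x hx
    have hx1 : (1:ℝ) < x := hx
    rw [norm_div, norm_of_nonneg (exp_pos _).le, norm_of_nonneg (by linarith : (0:ℝ) ≤ x),
      neg_one_mul]
    exact div_le_self (exp_pos _).le hx1.le

lemma key1 : ∫ x in Ioi (1:ℝ), exp (-x) / x = ∫ x in Ioi (1:ℝ), exp (-x) * log x := by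
  have hderiv : ∀ x ∈ Ici (1:ℝ), HasDerivAt (fun t => exp (-t) * log t)
      (exp (-x) / x - exp (-x) * log x) x := by
    intro x hx
    have hx0 : (0:ℝ) < x := lt_of_lt_of_le one_pos hx
    have h1 : HasDerivAt (fun t : ℝ => exp (-t)) (-exp (-x)) x := by
      simpa [Function.comp_def] using ((Real.hasDerivAt_exp (-x)).comp x ((hasDerivAt_id x).neg))
    have := h1.mul (Real.hasDerivAt_log hx0.ne')
    exact this.congr_deriv (by ring)
  have hint : IntegrableOn (fun x : ℝ => exp (-x) / x - exp (-x) * log x) (Ioi 1) :=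
    int_expdiv_Ioi1.sub int_explog_Ioi1
  have htend : Tendsto (fun x : ℝ => exp (-x) * log x) atTop (𝓝 0) := by
    have h2 : Tendsto (fun x : ℝ => x * exp (-x)) atTop (𝓝 0) := by
      simpa using Real.tendsto_pow_mul_exp_neg_atTop_nhds_zero 1
    refine squeeze_zero_norm' ?_ (by simpa using h2)
    filter_upwards [eventually_ge_atTop (1:ℝ)] with x hx
    rw [norm_mul, norm_of_nonneg (exp_pos _).le, norm_of_nonneg (log_nonneg hx)]
    calc exp (-x) * log x ≤ exp (-x) * x := by
          exact mul_le_mul_of_nonneg_left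
            ((log_le_sub_one_of_pos (by linarith)).trans (by linarith)) (exp_pos _).le
      _ = x * exp (-x) := mul_comm _ _
  have := integral_Ioi_of_hasDerivAt_of_tendsto' hderiv hint htend
  rw [integral_sub int_expdiv_Ioi1 int_explog_Ioi1] at this
  simp at this
  linarith


lemma exp_neg_sub_one_nonpos {x : ℝ} (hx : 0 ≤ x) : exp (-x) - 1 ≤ 0 := by
  have : exp (-x) ≤ exp 0 := exp_le_exp.mpr (by linarith)
  simpa using this

lemma neg_log_le (x : ℝ) (hx : 0 < x) : -log x ≤ 2 * x ^ (-(2:ℝ)⁻¹) := by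
  have h : log (x ^ (-(2:ℝ)⁻¹)) ≤ x ^ (-(2:ℝ)⁻¹) :=
    (log_le_sub_one_of_pos (rpow_pos_of_pos hx _)).trans (by linarith [rpow_pos_of_pos hx (-(2:ℝ)⁻¹)])
  rw [log_rpow hx] at h
  nlinarith

lemma int_explog_Ioo01 : IntegrableOn (fun x : ℝ => exp (-x) * log x) (Ioo 0 1) := by
  have h2 : IntegrableOn (fun x : ℝ => 2 * x ^ (-(2:ℝ)⁻¹)) (Ioo 0 1) := by
    have := (intervalIntegral.intervalIntegrable_rpow' (a := 0) (b := 1)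
      (r := -(2:ℝ)⁻¹) (by norm_num)).const_mul 2
    rw [intervalIntegrable_iff_integrableOn_Ioo_of_le zero_le_one] at this
    exact this
  refine Integrable.mono' h2 ?_ ?_
  · exact ((continuous_exp.comp continuous_neg).continuousOn.mul
      (continuousOn_log.mono (fun x hx => ne_of_gt hx.1))).aestronglyMeasurable measurableSet_Ioo
  · filter_upwards [ae_restrict_mem measurableSet_Ioo] with x hx
    rw [norm_mul, norm_of_nonneg (exp_pos _).le]
    have hlog : log x ≤ 0 := log_nonpos hx.1.le hx.2.le
    rw [norm_of_nonpos hlog]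
    calc exp (-x) * -log x ≤ 1 * -log x := by
          refine mul_le_mul_of_nonneg_right ?_ (by linarith)
          have : exp (-x) ≤ exp 0 := exp_le_exp.mpr (by linarith [hx.1])
          simpa using this
      _ = -log x := one_mul _
      _ ≤ 2 * x ^ (-(2:ℝ)⁻¹) := neg_log_le x hx.1

lemma one_sub_exp_neg_le (x : ℝ) (hx : 0 ≤ x) : 1 - exp (-x) ≤ x := by
  nlinarith [Real.add_one_le_exp (-x)]

lemma int_f2 : IntegrableOn (fun x : ℝ => (exp (-x) - 1) / x) (Ioo 0 1) := by
  have hc : IntegrableOn (fun _ : ℝ => (1:ℝ)) (Ioo 0 1) volume := by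
    apply (integrableOn_const_iff (C := (1:ℝ))).mpr
    right
    simp [Real.volume_Ioo]
  refine Integrable.mono' hc ?_ ?_
  · exact (((continuous_exp.comp continuous_neg).continuousOn.sub continuousOn_const).div
      continuousOn_id (fun x hx => ne_of_gt hx.1)).aestronglyMeasurable measurableSet_Ioo
  · filter_upwards [ae_restrict_mem measurableSet_Ioo] with x hx
    rw [norm_div, norm_of_nonneg hx.1.le, norm_of_nonpos (exp_neg_sub_one_nonpos hx.1.le),
      div_le_one hx.1]
    simpa using one_sub_exp_neg_le x hx.1.le

lemma key2 : ∫ x in Ioo (0:ℝ) 1, (exp (-x) - 1) / x = ∫ x in Ioo (0:ℝ) 1, exp (-x) * log x := by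
  have hderiv : ∀ x ∈ Ioo (0:ℝ) 1, HasDerivAt (fun t => (exp (-t) - 1) * log t)
      ((exp (-x) - 1) / x - exp (-x) * log x) x := by
    intro x hx
    have h1 : HasDerivAt (fun t : ℝ => exp (-t) - 1) (-exp (-x)) x := by
      simpa using (((Real.hasDerivAt_exp (-x)).comp x ((hasDerivAt_id x).neg)).sub_const 1)
    have := h1.mul (Real.hasDerivAt_log hx.1.ne')
    exact this.congr_deriv (by ring)
  have hint : IntervalIntegrable (fun x => (exp (-x) - 1) / x - exp (-x) * log x) volume 0 1 := by
    rw [intervalIntegrable_iff_integrableOn_Ioo_of_le zero_le_one]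
    exact int_f2.sub int_explog_Ioo01
  have ha : Tendsto (fun t : ℝ => (exp (-t) - 1) * log t) (𝓝[>] 0) (𝓝 0) := by
    have h2 : Tendsto (fun x : ℝ => -(log x * x ^ (1:ℝ))) (𝓝[>] 0) (𝓝 0) := by
      simpa using (tendsto_log_mul_rpow_nhdsGT_zero one_pos).neg
    refine squeeze_zero_norm' ?_ h2
    filter_upwards [Ioo_mem_nhdsGT_of_mem (by norm_num : (0:ℝ) ∈ Ico 0 1)] with x hx
    have h3 : ‖log x‖ = -log x := norm_of_nonpos (log_nonpos hx.1.le hx.2.le)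
    have h4 : ‖exp (-x) - 1‖ = -(exp (-x) - 1) := norm_of_nonpos (exp_neg_sub_one_nonpos hx.1.le)
    rw [norm_mul, h3, h4, rpow_one]
    have h5 := one_sub_exp_neg_le x hx.1.le
    nlinarith [log_nonpos hx.1.le hx.2.le]
  have hb : Tendsto (fun t : ℝ => (exp (-t) - 1) * log t) (𝓝[<] 1) (𝓝 0) := by
    have hc : ContinuousAt (fun t : ℝ => (exp (-t) - 1) * log t) 1 := by
      have : ContinuousAt log 1 := Real.continuousAt_log one_ne_zero
      fun_prop (disch := norm_num)
    simpa using (hc.continuousWithinAt (s := Iio 1)).tendsto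
  have h0 := intervalIntegral.integral_eq_sub_of_hasDerivAt_of_tendsto one_pos hderiv hint ha hb
  rw [intervalIntegral.integral_of_le zero_le_one, integral_Ioc_eq_integral_Ioo,
    integral_sub int_f2 int_explog_Ioo01] at h0
  linarith



lemma int_explog_Ioi0 : IntegrableOn (fun x : ℝ => exp (-x) * log x) (Ioi 0) := by
  rw [← Ioc_union_Ioi_eq_Ioi (zero_le_one : (0:ℝ) ≤ 1), integrableOn_union]
  exact ⟨(integrableOn_Ioc_iff_integrableOn_Ioo).mpr int_explog_Ioo01, int_explog_Ioi1⟩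

lemma key3 : deriv Real.Gamma 1 = ∫ x in Ioi (0:ℝ), exp (-x) * log x := by
  set I : ℝ := ∫ x in Ioi (0:ℝ), exp (-x) * log x with hI
  have h := Complex.hasDerivAt_GammaIntegral (s := 1) (by simp)
  have hcast : (∫ t : ℝ in Ioi 0, (t:ℂ) ^ ((1:ℂ) - 1) * (Real.log t * Real.exp (-t))) = (I:ℂ) := by
    have h1 : (∫ t : ℝ in Ioi 0, (t:ℂ) ^ ((1:ℂ) - 1) * (Real.log t * Real.exp (-t))) =
        ∫ t : ℝ in Ioi 0, ((exp (-t) * log t : ℝ) : ℂ) := by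
      refine setIntegral_congr_fun measurableSet_Ioi fun x hx => ?_
      rw [sub_self, Complex.cpow_zero]
      push_cast
      ring
    rw [h1, hI]
    exact integral_ofReal
  rw [hcast] at h
  have hev : Complex.Gamma =ᶠ[𝓝 (1:ℂ)] Complex.GammaIntegral := by
    filter_upwards [(isOpen_lt continuous_const Complex.continuous_re).mem_nhds
      (by simp : (0:ℝ) < Complex.re 1)] with s hs
    exact Complex.Gamma_eq_integral hs
  have hG : HasDerivAt Complex.Gamma (I:ℂ) 1 := h.congr_of_eventuallyEq hev
  have hG1 : HasDerivAt Complex.Gamma (I:ℂ) ((1:ℝ):ℂ) := by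
    simpa using hG
  have hR : HasDerivAt (fun x : ℝ => (Complex.Gamma x).re) (Complex.ofReal I).re 1 :=
    hG1.real_of_complex
  have : HasDerivAt Real.Gamma I 1 := by
    rw [show Real.Gamma = fun x : ℝ => (Complex.Gamma x).re from rfl]; simpa using hR
  exact this.deriv

lemma split : ∫ x in Ioi (0:ℝ), exp (-x) * log x =
    (∫ x in Ioo (0:ℝ) 1, exp (-x) * log x) + ∫ x in Ioi (1:ℝ), exp (-x) * log x := by
  rw [← Ioc_union_Ioi_eq_Ioi (zero_le_one : (0:ℝ) ≤ 1),
    setIntegral_union (Ioc_disjoint_Ioi le_rfl) measurableSet_Ioi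
      ((integrableOn_Ioc_iff_integrableOn_Ioo).mpr int_explog_Ioo01) int_explog_Ioi1,
    integral_Ioc_eq_integral_Ioo]

/-- The identity `∫₀¹ (e^{−t} − 1)/t dt + ∫₁^∞ e^{−t}/t dt = −γ`,
where `γ = −Γ′(1)` is the Euler–Mascheroni constant, i.e. the right-hand
side equals `Γ′(1) = deriv Real.Gamma 1`. -/
theorem stmt1 :
    (∫ t in Set.Ioo (0:ℝ) 1, (Real.exp (-t) - 1) / t) +
      (∫ t in Set.Ioi (1:ℝ), Real.exp (-t) / t) = deriv Real.Gamma 1 := by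
  rw [key2, key1, ← split, key3]
end

section
/- Let W : ℤ^d × ℤ^d → ℝ satisfy W(x,y) ≥ c · d(x,y)^{−d} for all x ≠ y (where d(x,y) is the graph distance and c > 0). Define u_n(x) = 1_{d(x,0)≤n} / √(V(0,n)) with V(0,n) = #{x : d(x,0) ≤ n}. Then ∑_{x,y} u_n(x) u_n(y) W(x,y) → +∞ as n → ∞. In particular the quadratic form associated to W is unbounded on ℓ²(ℤ^d). -/
open Finset Filter

noncomputable def Bset (d n : ℕ) : Finset (Fin d → ℤ) :=
  (Finset.Icc (fun _ : Fin d => -(n:ℤ)) (fun _ => (n:ℤ))).filter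
    (fun x => ∑ i, |x i| ≤ (n:ℤ))

lemma mem_Bset {d n : ℕ} {x : Fin d → ℤ} : x ∈ Bset d n ↔ ∑ i, |x i| ≤ (n:ℤ) := by
  constructor
  · exact fun h => (Finset.mem_filter.1 h).2
  · intro h
    have key : ∀ i, |x i| ≤ (n:ℤ) := by
      intro i
      have h1 : |x i| ≤ (n:ℤ) :=
        le_trans (Finset.single_le_sum (f := fun i => |x i|)
          (fun j _ => abs_nonneg _) (Finset.mem_univ i)) h
      exact h1
    refine Finset.mem_filter.2 ⟨Finset.mem_Icc.2 ⟨fun i => ?_, fun i => ?_⟩, h⟩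
    · show -(n:ℤ) ≤ x i
      have := abs_le.1 (key i); omega
    · show x i ≤ (n:ℤ)
      have := abs_le.1 (key i); omega

lemma card_Icc_pi {d : ℕ} (x : Fin d → ℤ) (t : ℕ) :
    (Finset.Icc (fun i => x i - (t:ℤ)) (fun i => x i + (t:ℤ))).card = (2*t+1)^d := by
  rw [Pi.card_Icc]
  have h : ∀ i : Fin d, (Finset.Icc (x i - (t:ℤ)) (x i + (t:ℤ))).card = 2*t+1 := by
    intro i; rw [Int.card_Icc]; omega
  simp [h]

lemma card_ball_le {d : ℕ} (n s : ℕ) (x : Fin d → ℤ) :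
    ((Bset d n).filter (fun y => ∑ i, |x i - y i| ≤ (s:ℤ))).card ≤ (2*s+1)^d := by
  have hsub : ((Bset d n).filter (fun y => ∑ i, |x i - y i| ≤ (s:ℤ))) ⊆
      Finset.Icc (fun i => x i - (s:ℤ)) (fun i => x i + (s:ℤ)) := by
    intro y hy
    have h := (Finset.mem_filter.1 hy).2
    have key : ∀ i, |x i - y i| ≤ (s:ℤ) := by
      intro i
      exact le_trans (Finset.single_le_sum (f := fun i => |x i - y i|)
        (fun j _ => abs_nonneg _) (Finset.mem_univ i)) h
    refine Finset.mem_Icc.2 ⟨fun i => ?_, fun i => ?_⟩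
    · show x i - (s:ℤ) ≤ y i
      have := abs_le.1 (key i); omega
    · show y i ≤ x i + (s:ℤ)
      have := abs_le.1 (key i); omega
  calc ((Bset d n).filter (fun y => ∑ i, |x i - y i| ≤ (s:ℤ))).card
      ≤ (Finset.Icc (fun i => x i - (s:ℤ)) (fun i => x i + (s:ℤ))).card :=
        Finset.card_le_card hsub
    _ = (2*s+1)^d := card_Icc_pi x s

lemma card_ball_ge {d : ℕ} (n s t : ℕ) (ht : d*t ≤ s) (x : Fin d → ℤ)
    (hx : ∑ i, |x i| ≤ (n:ℤ) - s) :
    (2*t+1)^d ≤ ((Bset d n).filter (fun y => ∑ i, |x i - y i| ≤ (s:ℤ))).card := by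
  have hsub : Finset.Icc (fun i => x i - (t:ℤ)) (fun i => x i + (t:ℤ)) ⊆
      ((Bset d n).filter (fun y => ∑ i, |x i - y i| ≤ (s:ℤ))) := by
    intro y hy
    rw [Finset.mem_Icc] at hy
    have hyi : ∀ i, |x i - y i| ≤ (t:ℤ) := by
      intro i
      have h1 : x i - (t:ℤ) ≤ y i := hy.1 i
      have h2 : y i ≤ x i + (t:ℤ) := hy.2 i
      rw [abs_le]; omega
    have hdist : ∑ i, |x i - y i| ≤ (s:ℤ) := by
      calc ∑ i, |x i - y i| ≤ ∑ _i : Fin d, (t:ℤ) :=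
            Finset.sum_le_sum (fun i _ => hyi i)
        _ = ((d*t : ℕ) : ℤ) := by simp [mul_comm]
        _ ≤ (s:ℤ) := by exact_mod_cast ht
    refine Finset.mem_filter.2 ⟨mem_Bset.2 ?_, hdist⟩
    calc ∑ i, |y i| ≤ ∑ i, (|x i| + |x i - y i|) := by
          refine Finset.sum_le_sum (fun i _ => ?_)
          have h3 : |y i| - |x i| ≤ |y i - x i| := abs_sub_abs_le_abs_sub _ _
          rw [abs_sub_comm] at h3
          omega
      _ = (∑ i, |x i|) + ∑ i, |x i - y i| := Finset.sum_add_distrib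
      _ ≤ ((n:ℤ) - s) + s := add_le_add hx hdist
      _ = (n:ℤ) := by ring
  calc (2*t+1)^d = (Finset.Icc (fun i => x i - (t:ℤ)) (fun i => x i + (t:ℤ))).card :=
        (card_Icc_pi x t).symm
    _ ≤ _ := Finset.card_le_card hsub

lemma card_annulus {d : ℕ} (n a b t : ℕ) (ht : d*t ≤ b) (x : Fin d → ℤ)
    (hx : ∑ i, |x i| ≤ (n:ℤ) - b) :
    (2*t+1)^d ≤ ((Bset d n).filter
      (fun y => (a:ℤ) < ∑ i, |x i - y i| ∧ ∑ i, |x i - y i| ≤ (b:ℤ))).card + (2*a+1)^d := by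
  have h1 := card_ball_ge n b t ht x hx
  have h2 := card_ball_le n a x
  have hsub : ((Bset d n).filter (fun y => ∑ i, |x i - y i| ≤ (b:ℤ))) ⊆
      ((Bset d n).filter
        (fun y => (a:ℤ) < ∑ i, |x i - y i| ∧ ∑ i, |x i - y i| ≤ (b:ℤ))) ∪
      ((Bset d n).filter (fun y => ∑ i, |x i - y i| ≤ (a:ℤ))) := by
    intro y hy
    have h := Finset.mem_filter.1 hy
    by_cases hca : ∑ i, |x i - y i| ≤ (a:ℤ)
    · exact Finset.mem_union_right _ (Finset.mem_filter.2 ⟨h.1, hca⟩)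
    · exact Finset.mem_union_left _ (Finset.mem_filter.2 ⟨h.1, lt_of_not_ge hca, h.2⟩)
  have h3 := Finset.card_le_card hsub
  have h4 := Finset.card_union_le
    ((Bset d n).filter (fun y => (a:ℤ) < ∑ i, |x i - y i| ∧ ∑ i, |x i - y i| ≤ (b:ℤ)))
    ((Bset d n).filter (fun y => ∑ i, |x i - y i| ≤ (a:ℤ)))
  exact le_trans h1 (le_trans h3 (le_trans h4 (Nat.add_le_add_left h2 _)))

noncomputable def Ann (d n : ℕ) (x : Fin d → ℤ) (a b : ℕ) : Finset (Fin d → ℤ) :=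
  (Bset d n).filter
    (fun y => ((a : ℕ):ℤ) < ∑ i, |x i - y i| ∧ ∑ i, |x i - y i| ≤ ((b:ℕ):ℤ))

lemma W_nonneg {d : ℕ} {W : (Fin d → ℤ) → (Fin d → ℤ) → ℝ} {c : ℝ} (hc : 0 < c)
    (hW : ∀ x y : Fin d → ℤ, x ≠ y →
      c / (((∑ i, |x i - y i| : ℤ) : ℝ)) ^ d ≤ W x y)
    (hWdiag : ∀ x, 0 ≤ W x x) (x y : Fin d → ℤ) : 0 ≤ W x y := by
  by_cases hxy : x = y
  · subst hxy; exact hWdiag x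
  · refine le_trans ?_ (hW x y hxy)
    apply div_nonneg hc.le
    apply pow_nonneg
    exact_mod_cast Finset.sum_nonneg (fun i _ => abs_nonneg (x i - y i))

lemma inner_bound {d : ℕ} (hd : 1 ≤ d) {W : (Fin d → ℤ) → (Fin d → ℤ) → ℝ} {c : ℝ}
    (hc : 0 < c)
    (hW : ∀ x y : Fin d → ℤ, x ≠ y →
      c / (((∑ i, |x i - y i| : ℤ) : ℝ)) ^ d ≤ W x y)
    (hWdiag : ∀ x, 0 ≤ W x x) (n : ℕ) {x : Fin d → ℤ} (hx : x ∈ Bset d (n/2)) :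
    (Nat.log (3*d) (n/2) : ℝ) * (c * (2/(d:ℝ))^d / 2) ≤ ∑ y ∈ Bset d n, W x y := by
  have hd0 : (0:ℝ) < d := by exact_mod_cast hd
  set R := 3*d with hR
  have hR2 : 2 ≤ R := by omega
  set K := Nat.log R (n/2) with hK
  set A : ℕ → Finset (Fin d → ℤ) := fun j => Ann d n x (R^j) (R^(j+1)) with hA
  have hAsub : ∀ j, A j ⊆ Bset d n := fun j => Finset.filter_subset _ _
  have hdisj : (↑(Finset.range K) : Set ℕ).PairwiseDisjoint A := by
    have key : ∀ i j : ℕ, i < j → ∀ y, y ∈ A i → y ∉ A j := by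
      intro i j hij y hyi hyj
      simp only [hA, Ann] at hyi hyj
      have h1 := (Finset.mem_filter.1 hyi).2
      have h2 := (Finset.mem_filter.1 hyj).2
      have hpow : (R:ℕ)^(i+1) ≤ R^j := Nat.pow_le_pow_right (by omega) hij
      have hcast : ((R^(i+1):ℕ):ℤ) ≤ ((R^j:ℕ):ℤ) := by exact_mod_cast hpow
      have := h1.2
      have := h2.1
      omega
    intro i _ j _ hij
    rcases lt_or_gt_of_ne hij with h | h
    · exact Finset.disjoint_left.2 (fun y hy hy' => key i j h y hy hy')
    · exact Finset.disjoint_right.2 (fun y hy hy' => key j i h y hy hy')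
  have perscale : ∀ j ∈ Finset.range K,
      c * (2/(d:ℝ))^d / 2 ≤ ∑ y ∈ A j, W x y := by
    intro j hj
    have hjK : j < K := Finset.mem_range.1 hj
    have hn2 : n/2 ≠ 0 := by
      intro h
      rw [hK, h] at hjK
      simp [Nat.log_zero_right] at hjK
    set m := R^j with hm
    have hm1 : 1 ≤ m := Nat.one_le_pow _ _ (by omega)
    have hRb : R^(j+1) ≤ n/2 :=
      le_trans (Nat.pow_le_pow_right (by omega) (by omega : j+1 ≤ K))
        (Nat.pow_log_le_self R hn2)
    have hxn : ∑ i, |x i| ≤ (n:ℤ) - (R^(j+1):ℕ) := by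
      have hx2 : ∑ i, |x i| ≤ ((n/2:ℕ):ℤ) := mem_Bset.1 hx
      have hnn : (n/2:ℕ) + R^(j+1) ≤ n := by omega
      have hcast : ((n/2:ℕ):ℤ) + ((R^(j+1):ℕ):ℤ) ≤ (n:ℤ) := by exact_mod_cast hnn
      omega
    have hbt : d * (3*m) = R^(j+1) := by rw [pow_succ, hR]; ring
    have hcard : (2*(3*m)+1)^d ≤ (A j).card + (2*m+1)^d :=
      card_annulus n m (R^(j+1)) (3*m) (le_of_eq hbt) x hxn
    -- hcard : (2*(3*m)+1)^d ≤ (A j).card + (2*m+1)^d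
    have h2 : 2*(2*m+1)^d ≤ (2*(3*m)+1)^d := by
      calc 2*(2*m+1)^d ≤ 2^d*(2*m+1)^d :=
            Nat.mul_le_mul_right _ (Nat.one_lt_two_pow_iff.mpr (by omega))
        _ = (2*(2*m+1))^d := (mul_pow 2 (2*m+1) d).symm
        _ ≤ (2*(3*m)+1)^d := Nat.pow_le_pow_left (by omega) d
    have h4 : (6*m)^d ≤ (2*(3*m)+1)^d := Nat.pow_le_pow_left (by omega) d
    have h3 : (6*m)^d ≤ 2 * (A j).card := by
      have h5 : (6*m)^d + 2*(2*m+1)^d ≤ 2*(A j).card + 2*(2*m+1)^d := by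
        calc (6*m)^d + 2*(2*m+1)^d ≤ (2*(3*m)+1)^d + (2*(3*m)+1)^d := add_le_add h4 h2
          _ = 2*(2*(3*m)+1)^d := (two_mul _).symm
          _ ≤ 2*((A j).card + (2*m+1)^d) := Nat.mul_le_mul_left 2 hcard
          _ = 2*(A j).card + 2*(2*m+1)^d := by ring
      exact le_of_add_le_add_right h5
    set B : ℝ := ((R^(j+1):ℕ) : ℝ) with hB
    have hBpos : 0 < B := by
      rw [hB]; exact_mod_cast pow_pos (by omega : 0 < R) (j+1)
    have hWy : ∀ y ∈ A j, c / B^d ≤ W x y := by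
      intro y hy
      simp only [hA, Ann, Finset.mem_filter] at hy
      obtain ⟨hyB, hylo, hyhi⟩ := hy
      have hm1' : (1:ℤ) ≤ ((m:ℕ):ℤ) := by exact_mod_cast hm1
      have hD1 : (1:ℤ) ≤ ∑ i, |x i - y i| := by omega
      have hxy : x ≠ y := by
        intro h; subst h
        have hz : ∑ i, |x i - x i| = (0:ℤ) := by simp
        omega
      refine le_trans ?_ (hW x y hxy)
      have hDpos : (0:ℝ) < ((∑ i, |x i - y i| : ℤ) : ℝ) := by exact_mod_cast hD1.trans_lt' zero_lt_one
      have hDR : ((∑ i, |x i - y i| : ℤ) : ℝ) ≤ B := by rw [hB]; exact_mod_cast hyhi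
      have hpow : ((∑ i, |x i - y i| : ℤ) : ℝ)^d ≤ B^d := pow_le_pow_left₀ hDpos.le hDR d
      exact div_le_div_of_nonneg_left hc.le (pow_pos hDpos d) hpow
    have hsum : (A j).card • (c / B^d) ≤ ∑ y ∈ A j, W x y :=
      Finset.card_nsmul_le_sum _ _ _ hWy
    rw [nsmul_eq_mul] at hsum
    refine le_trans ?_ hsum
    have hcardR : (6*(m:ℝ)) ^ d / 2 ≤ ((A j).card : ℝ) := by
      have hcast : (((6*m)^d : ℕ):ℝ) ≤ ((2 * (A j).card : ℕ):ℝ) := by exact_mod_cast h3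
      push_cast at hcast
      linarith
    have hBval : B = 3*(d:ℝ)*(m:ℝ) := by
      rw [hB, ← hbt]; push_cast; ring
    have hmpos : (0:ℝ) < (m:ℝ) := by exact_mod_cast hm1
    have h6 : (6*(m:ℝ))^d = (2/(d:ℝ))^d * (3*(d:ℝ)*(m:ℝ))^d := by
      rw [← mul_pow]; congr 1; field_simp; ring
    have hBne : (3*(d:ℝ)*(m:ℝ)) ^ d ≠ 0 := by positivity
    calc c * (2/(d:ℝ))^d / 2 = ((6*(m:ℝ))^d/2) * (c / B^d) := by
          rw [hBval, h6]; field_simp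
      _ ≤ ((A j).card:ℝ) * (c / B^d) :=
          mul_le_mul_of_nonneg_right hcardR (by positivity)
  calc (K:ℝ) * (c * (2/(d:ℝ))^d / 2)
      = ∑ _j ∈ Finset.range K, c * (2/(d:ℝ))^d / 2 := by
        rw [Finset.sum_const, Finset.card_range, nsmul_eq_mul]
    _ ≤ ∑ j ∈ Finset.range K, ∑ y ∈ A j, W x y := Finset.sum_le_sum perscale
    _ = ∑ y ∈ (Finset.range K).biUnion A, W x y := (Finset.sum_biUnion hdisj).symm
    _ ≤ ∑ y ∈ Bset d n, W x y := by
        apply Finset.sum_le_sum_of_subset_of_nonneg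
        · exact Finset.biUnion_subset.2 (fun j _ => hAsub j)
        · exact fun y _ _ => W_nonneg hc hW hWdiag x y

theorem stmt8 (d : ℕ) (hd : 1 ≤ d) (W : (Fin d → ℤ) → (Fin d → ℤ) → ℝ)
    (c : ℝ) (hc : 0 < c)
    (hW : ∀ x y : Fin d → ℤ, x ≠ y →
      c / (((∑ i, |x i - y i| : ℤ) : ℝ)) ^ d ≤ W x y)
    (hWdiag : ∀ x, 0 ≤ W x x) :
    Filter.Tendsto
      (fun n : ℕ =>
        (∑ x ∈ (Finset.Icc (fun _ : Fin d => -(n:ℤ)) (fun _ => (n:ℤ))).filter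
            (fun x => ∑ i, |x i| ≤ (n:ℤ)),
          ∑ y ∈ (Finset.Icc (fun _ : Fin d => -(n:ℤ)) (fun _ => (n:ℤ))).filter
            (fun x => ∑ i, |x i| ≤ (n:ℤ)), W x y) /
        (((Finset.Icc (fun _ : Fin d => -(n:ℤ)) (fun _ => (n:ℤ))).filter
            (fun x => ∑ i, |x i| ≤ (n:ℤ))).card : ℝ))
      Filter.atTop Filter.atTop := by
  have hd0 : (0:ℝ) < d := by exact_mod_cast hd
  set ε : ℝ := c * (2/(d:ℝ))^d / 2 with hε
  have hεpos : 0 < ε := by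
    have := pow_pos (div_pos two_pos hd0) d
    positivity
  have h4dpos : (0:ℝ) < (4*(d:ℝ))^d := pow_pos (by linarith) d
  set C : ℝ := ε / ((4*(d:ℝ)))^d with hC
  have hCpos : 0 < C := div_pos hεpos h4dpos
  have hlog : Filter.Tendsto (fun n : ℕ => (Nat.log (3*d) (n/2) : ℝ)) atTop atTop := by
    apply tendsto_natCast_atTop_atTop.comp
    apply Filter.tendsto_atTop_atTop.2
    intro b
    refine ⟨2*(3*d)^b, fun n hn => ?_⟩
    have h1 : (3*d)^b ≤ n/2 := (Nat.le_div_iff_mul_le (by norm_num)).2 (by omega)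
    have hb1 : 1 < 3*d := by omega
    have hpow1 : 1 ≤ (3*d)^b := Nat.one_le_pow _ _ (by omega)
    have hne : n/2 ≠ 0 := by omega
    exact (Nat.le_log_iff_pow_le hb1 hne).2 h1
  apply tendsto_atTop_mono ?_ (hlog.atTop_mul_const hCpos)
  intro n
  show (Nat.log (3*d) (n/2) : ℝ) * C ≤
    (∑ x ∈ Bset d n, ∑ y ∈ Bset d n, W x y) / ((Bset d n).card : ℝ)
  set K := Nat.log (3*d) (n/2) with hK
  set q := n/(2*d) with hq
  have hBn_pos : 0 < ((Bset d n).card : ℝ) := by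
    have h0 : (fun _ : Fin d => (0:ℤ)) ∈ Bset d n := mem_Bset.2 (by simp)
    exact_mod_cast Finset.card_pos.2 ⟨_, h0⟩
  rw [le_div_iff₀ hBn_pos]
  -- card bounds
  have hcard1 : (Bset d n).card ≤ (2*n+1)^d := by
    have h := card_ball_le (d := d) n n (fun _ => 0)
    have heq : (Bset d n).filter (fun y => ∑ i, |(fun _ : Fin d => (0:ℤ)) i - y i| ≤ (n:ℤ))
        = Bset d n := by
      apply Finset.filter_true_of_mem
      intro y hy
      simpa using mem_Bset.1 hy
    rwa [heq] at h
  have hcard2 : (2*q+1)^d ≤ (Bset d (n/2)).card := by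
    have h := card_ball_ge (d := d) (n/2) (n/2) q ?_ (fun _ => 0) ?_
    · have heq : (Bset d (n/2)).filter
          (fun y => ∑ i, |(fun _ : Fin d => (0:ℤ)) i - y i| ≤ ((n/2:ℕ):ℤ))
          = Bset d (n/2) := by
        apply Finset.filter_true_of_mem
        intro y hy
        simpa using mem_Bset.1 hy
      rwa [heq] at h
    · show d * (n/(2*d)) ≤ n/2
      rw [← Nat.div_div_eq_div_mul]
      calc d * (n/2/d) = (n/2/d)*d := Nat.mul_comm _ _
        _ ≤ n/2 := Nat.div_mul_le_self _ _
    · simp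
  have hcard3 : 2*n+1 ≤ 4*d*(2*q+1) := by
    have h := Nat.div_add_mod n (2*d)
    have h2 : n % (2*d) < 2*d := Nat.mod_lt _ (by omega)
    rw [← hq] at h
    nlinarith [h, h2]
  have hcard4 : (Bset d n).card ≤ (4*d)^d * (Bset d (n/2)).card := by
    calc (Bset d n).card ≤ (2*n+1)^d := hcard1
      _ ≤ (4*d*(2*q+1))^d := Nat.pow_le_pow_left hcard3 d
      _ = (4*d)^d * (2*q+1)^d := mul_pow _ _ _
      _ ≤ (4*d)^d * (Bset d (n/2)).card := Nat.mul_le_mul_left _ hcard2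
  have hBmn : Bset d (n/2) ⊆ Bset d n := by
    intro z hz
    refine mem_Bset.2 (le_trans (mem_Bset.1 hz) ?_)
    exact_mod_cast Nat.div_le_self n 2
  have hS : ((Bset d (n/2)).card : ℝ) * ((K:ℝ) * ε) ≤
      ∑ x ∈ Bset d n, ∑ y ∈ Bset d n, W x y := by
    calc ((Bset d (n/2)).card : ℝ) * ((K:ℝ) * ε)
        = ∑ _x ∈ Bset d (n/2), (K:ℝ)*ε := by
          rw [Finset.sum_const, nsmul_eq_mul]
      _ ≤ ∑ x ∈ Bset d (n/2), ∑ y ∈ Bset d n, W x y :=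
          Finset.sum_le_sum (fun x hx => inner_bound hd hc hW hWdiag n hx)
      _ ≤ ∑ x ∈ Bset d n, ∑ y ∈ Bset d n, W x y := by
          apply Finset.sum_le_sum_of_subset_of_nonneg hBmn
          exact fun x _ _ => Finset.sum_nonneg (fun y _ => W_nonneg hc hW hWdiag x y)
  have hcard4R : ((Bset d n).card : ℝ) ≤ (4*(d:ℝ))^d * ((Bset d (n/2)).card : ℝ) := by
    exact_mod_cast hcard4
  calc (K:ℝ) * C * ((Bset d n).card : ℝ)
      ≤ (K:ℝ) * C * ((4*(d:ℝ))^d * ((Bset d (n/2)).card : ℝ)) := by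
        apply mul_le_mul_of_nonneg_left hcard4R
        positivity
    _ = ((Bset d (n/2)).card : ℝ) * ((K:ℝ) * ε) := by
        rw [hC]; field_simp
    _ ≤ _ := hS
end
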